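/- arXiv:2505.20025 — 2 statements merged into one kernel-verified Lean document; each statement's English description precedes it below -/
import Mathlib

section
/- Let p, q, a, λ, m, n be complex numbers with p ≠ q. If 2*(m+n) = 3*p + q, m^2 + 4*m*n + n^2 = 3*p*(p+q) + 2*a, and 2*m*n*(m+n) = p^2*(p+3*q) + a*(3*p+q), then we reach a contradiction; i.e., these three equations together imply (p - q)^3 = 0. -/
/-- Elimination in the non-realizability proof of the weak combinatoric (1,2,0,1,0,1,0,0):
the three coefficient equations force (p - q)^3 = 0, contradicting p ≠ q. -/
theorem stmt_5 (p q a l m n : ℂ) (hpq : p ≠ q)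
    (h1 : 2 * (m + n) = 3 * p + q)
    (h2 : m ^ 2 + 4 * m * n + n ^ 2 = 3 * p * (p + q) + 2 * a)
    (h3 : 2 * m * n * (m + n) = p ^ 2 * (p + 3 * q) + a * (3 * p + q)) :
    False := by
  have key : (p - q) ^ 3 = 0 := by
    linear_combination (4*(m+n)^2 + 2*(3*p+q)*(m+n) - 3*p^2 - 6*p*q + q^2 - 8*a) * h1
      + (-8*(m+n)) * h2 + 8 * h3
  exact hpq (sub_eq_zero.mp (pow_eq_zero_iff (by norm_num) |>.mp key))
end

section
/- For any a, b, c, d, e, f ∈ ℂ and p, q ∈ ℂ with f ≠ -1, the intersection multiplicity at the origin of the affine curves X^2 - Y = 0 and X^2 + b*Y^2 + d*X*Y + f*Y = 0 equals 2. -/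
/-!
The difference of the two equations is `Y * (1 + f + b Y + d X)`, and `1 + f + b Y + d X` is a
unit of `ℂ⟦X, Y⟧` because `f ≠ -1`; hence the two curves cut out the ideal `(Y, X²)`. This ideal
is the kernel of the surjection `φ ↦ φ(0) + (∂φ/∂X)(0) ε` onto the dual numbers `ℂ[ε]`, which
have dimension 2.
-/

open MvPowerSeries

/-- The local intersection multiplicity at the origin of two plane curve germs,
defined as the ℂ-dimension of the quotient of the ring of formal power series
ℂ⟦X,Y⟧ by the ideal generated by the two defining equations. -/
noncomputable def interMultOrigin (f g : MvPowerSeries (Fin 2) ℂ) : ℕ :=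
  Module.finrank ℂ (MvPowerSeries (Fin 2) ℂ ⧸ Ideal.span {f, g})

open TrivSqZeroExt

namespace MvPowerSeries

variable {σ R : Type*} [CommRing R] [DecidableEq σ] (i : σ)

theorem coeff_single_one_mul (f g : MvPowerSeries σ R) :
    coeff (Finsupp.single i 1) (f * g) =
      constantCoeff f * coeff (Finsupp.single i 1) g +
        coeff (Finsupp.single i 1) f * constantCoeff g := by
  rw [coeff_mul, Finsupp.antidiagonal_single, Finset.sum_map,
    show Finset.HasAntidiagonal.antidiagonal 1 = {(0, 1), (1, 0)} from rfl]
  simp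

noncomputable def toDualNumber : MvPowerSeries σ R →ₐ[R] DualNumber R where
  toFun f := inl (constantCoeff f) + inr (coeff (Finsupp.single i 1) f)
  map_one' := by ext <;> simp [coeff_one]
  map_mul' f g := by ext <;> simp [coeff_single_one_mul, mul_comm]
  map_zero' := by ext <;> simp
  map_add' f g := by ext <;> simp
  commutes' r := by ext <;> simp [algebraMap_apply, algebraMap_eq_inl, coeff_C]

@[simp] theorem fst_toDualNumber (f : MvPowerSeries σ R) :
    (toDualNumber i f).fst = constantCoeff f := by
  simp [toDualNumber]

@[simp] theorem snd_toDualNumber (f : MvPowerSeries σ R) :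
    (toDualNumber i f).snd = coeff (Finsupp.single i 1) f := by
  simp [toDualNumber]

theorem toDualNumber_surjective : Function.Surjective (toDualNumber (R := R) i) := fun x =>
  ⟨C x.fst + C x.snd * X i, by ext <;> simp [coeff_C, coeff_X]⟩

theorem ker_toDualNumber_zero :
    RingHom.ker (toDualNumber (σ := Fin 2) (R := R) 0) = Ideal.span {X 1, X 0 ^ 2} := by
  refine le_antisymm (fun f hf => ?_) ?_
  · have h0 : constantCoeff f = 0 := by simpa using congrArg fst hf
    have h1 : coeff (Finsupp.single 0 1) f = 0 := by simpa using congrArg snd hf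
    let g : MvPowerSeries (Fin 2) R := fun n => if n 1 = 0 then coeff n f else 0
    have hg : ∀ n, coeff n g = if n 1 = 0 then coeff n f else 0 := fun _ => rfl
    obtain ⟨A, hA⟩ : X 1 ∣ f - g := X_dvd_iff.2 fun m hm => by simp [hg, hm]
    obtain ⟨B, hB⟩ : X 0 ^ 2 ∣ g := X_pow_dvd_iff.2 fun m hm => by
      rw [hg]
      split_ifs with hm1
      · obtain rfl | rfl : m = 0 ∨ m = Finsupp.single 0 1 := by
          interval_cases h : m 0
          · left; ext j; fin_cases j <;> simp_all
          · right; ext j; fin_cases j <;> simp_all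
        exacts [h0, h1]
      · rfl
    exact Ideal.mem_span_pair.2 ⟨A, B, by rw [mul_comm A, mul_comm B, ← hA, ← hB]; ring⟩
  · rw [Ideal.span_le, Set.pair_subset_iff]
    constructor <;> ext <;> simp [coeff_X, sq, Finsupp.single_left_inj]

end MvPowerSeries

theorem Ideal.span_pair_mul_isUnit {α : Type*} [CommSemiring α] (x y : α) {u : α}
    (hu : IsUnit u) :
    Ideal.span {x, y * u} = Ideal.span {x, y} := by
  rw [Ideal.span_insert, Ideal.span_singleton_mul_right_unit hu, ← Ideal.span_insert]

theorem DualNumber.finrank_eq_two (R : Type*) [CommRing R] [StrongRankCondition R] :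
    Module.finrank R (DualNumber R) = 2 :=
  (Module.finrank_prod (R := R) (M := R) (M' := R)).trans (by simp)

theorem span_parabola_conic_eq {R : Type*} [CommRing R] (b d f : R) (hf : IsUnit (1 + f)) :
    Ideal.span {X 0 ^ 2 - X 1, X 0 ^ 2 + C b * X 1 ^ 2 + C d * X 0 * X 1 + C f * X 1} =
      (Ideal.span {X 1, X 0 ^ 2} : Ideal (MvPowerSeries (Fin 2) R)) := by
  have hu : IsUnit (1 + C f + C b * X 1 + C d * X 0 : MvPowerSeries (Fin 2) R) := by
    simpa [isUnit_iff_constantCoeff] using hf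
  rw [show (X 0 ^ 2 + C b * X 1 ^ 2 + C d * X 0 * X 1 + C f * X 1 : MvPowerSeries (Fin 2) R) =
      X 0 ^ 2 - X 1 + X 1 * (1 + C f + C b * X 1 + C d * X 0) by ring,
    Ideal.span_pair_left_add, Ideal.span_pair_mul_isUnit _ _ hu, Ideal.span_pair_sub_right,
    Ideal.span_pair_comm]

theorem stmt_9_general (b d f : ℂ) (hf : f ≠ -1) :
    interMultOrigin
      ((X 0) ^ 2 - X 1)
      ((X 0) ^ 2 + C (σ := Fin 2) (R := ℂ) b * (X 1) ^ 2 + C (σ := Fin 2) (R := ℂ) d * X 0 * X 1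
        + C (σ := Fin 2) (R := ℂ) f * X 1) = 2 := by
  have hf' : IsUnit (1 + f) := isUnit_iff_ne_zero.2 fun h => hf (by linear_combination h)
  rw [interMultOrigin, span_parabola_conic_eq b d f hf', ← ker_toDualNumber_zero,
    (Ideal.quotientKerAlgEquivOfSurjective (toDualNumber_surjective 0)).toLinearEquiv.finrank_eq,
    DualNumber.finrank_eq_two]

/-- The intersection multiplicity at the origin of the affine curves X² - Y = 0 and
X² + bY² + dXY + fY = 0 (dehomogenizations at [0:0:1] of the conics X² - YZ and
X² + bY² + dXY + fYZ) equals 2 whenever f ≠ -1. -/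
theorem stmt_9 (a b c d e f p q : ℂ) (hf : f ≠ -1) :
    interMultOrigin
      ((X 0) ^ 2 - X 1)
      ((X 0) ^ 2 + C (σ := Fin 2) (R := ℂ) b * (X 1) ^ 2 + C (σ := Fin 2) (R := ℂ) d * X 0 * X 1
        + C (σ := Fin 2) (R := ℂ) f * X 1) = 2 :=
  stmt_9_general b d f hf
end
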